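/- Test-round detection bound (ε part of the negligible security error lemma): Let N, s, m, k, w be natural numbers with s ≤ N, m ≤ N, k ≥ 1. Let T be distributed according to the hypergeometric distribution with population N, m marked items, and s draws (the number of attacked test rounds under a uniformly random partition), and conditionally on T = t let Y be binomial with t trials and success probability 1/k (each attacked test round is detected independently with probability at least 1/k, since among k trap types at least one detects the deviation). Then for every real χ with 0 ≤ χ, (m/N) − χ ≥ 0, and w/s ≤ ((m/N) − χ)/k, the probability that Y < w satisfies Pr[Y < w] ≤ exp(−2·χ²·s) + exp(−2·(((m/N) − χ)/k − w/s)² · s / ((m/N) − χ)). -/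

import Mathlib

open Finset

/-- The hypergeometric mass function: population `N`, `K` marked items, `n` draws. -/
noncomputable def hypergeomPMF (N K n j : ℕ) : ℝ :=
  ((K.choose j : ℝ) * ((N - K).choose (n - j) : ℝ)) / (N.choose n : ℝ)

/-- The binomial mass function with `t` trials and success probability `p`. -/
noncomputable def binomPMF (t : ℕ) (p : ℝ) (j : ℕ) : ℝ :=
  (t.choose j : ℝ) * p ^ j * (1 - p) ^ (t - j)

/-!
Condition on the number `t` of attacked test rounds. On the event `t < (m/N - χ)s` bound the
probability of too few detections by `1`: by Hoeffding's inequality for sampling without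
replacement this event has probability at most `exp(-2χ²s)`. Otherwise the Chernoff–Hoeffding
bound for `Binomial(t, 1/k)` gives `exp(-2(t/k - w)²/t)`, and since `(t/k - w)²/t` increases
in `t` on `t ≥ kw`, this is at most its value at `t = (m/N - χ)s`, the second exponential.
Both Chernoff bounds rest on Hoeffding's lemma for a Bernoulli variable.
-/

open Real

open MeasureTheory ProbabilityTheory in
theorem one_sub_add_mul_exp_le_exp {p : ℝ} (hp0 : 0 ≤ p) (hp1 : p ≤ 1) (l : ℝ) :
    1 - p + p * exp l ≤ exp (p * l + l ^ 2 / 8) := by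
  have hsupp : ∀ᵐ x ∂bernoulliMeasure (1 : ℝ) 0 ⟨p, hp0, hp1⟩, id x ∈ Set.Icc (0 : ℝ) 1 := by
    rw [ae_iff, bernoulliMeasure_apply_of_notMem_of_notMem]
    all_goals first | exact measurableSet_Icc.compl | simp
  have hmgf := (hasSubgaussianMGF_of_mem_Icc aemeasurable_id hsupp).mgf_le l
  simp only [mgf, integral_bernoulliMeasure] at hmgf
  norm_num at hmgf
  calc 1 - p + p * exp l
      = exp (p * l) * (p * exp (l * (1 - p)) + (1 - p) * exp (-(l * p))) := by
        rw [mul_add, mul_left_comm, ← exp_add, mul_left_comm, ← exp_add]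
        ring_nf
        rw [exp_zero]
        ring
    _ ≤ exp (p * l) * exp (1 / 4 * l ^ 2 / 2) := by gcongr
    _ = exp (p * l + l ^ 2 / 8) := by rw [← exp_add]; ring_nf

theorem sum_ite_lt_le_sum_mul_exp {ι : Type*} (S : Finset ι) {f g : ι → ℝ} {a l : ℝ}
    (hf : ∀ i ∈ S, 0 ≤ f i) (hl : 0 ≤ l) :
    ∑ i ∈ S, (if g i < a then f i else 0) ≤ ∑ i ∈ S, f i * exp (l * (a - g i)) := by
  refine sum_le_sum fun i hi => ?_
  split_ifs with h
  · exact le_mul_of_one_le_right (hf i hi) (one_le_exp (by nlinarith))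
  · exact mul_nonneg (hf i hi) (exp_pos _).le

theorem sum_mul_le_sum_ite_add_sum_mul {ι : Type*} (S : Finset ι) {f g : ι → ℝ} (P : ι → Prop)
    [DecidablePred P] {E : ℝ} (hf : ∀ i ∈ S, 0 ≤ f i) (hg : ∀ i ∈ S, g i ≤ 1)
    (hgE : ∀ i ∈ S, ¬P i → g i ≤ E) (hE : 0 ≤ E) :
    ∑ i ∈ S, f i * g i ≤ ∑ i ∈ S, (if P i then f i else 0) + (∑ i ∈ S, f i) * E := by
  rw [sum_mul, ← sum_add_distrib]
  refine sum_le_sum fun i hi => ?_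
  split_ifs with hP
  · nlinarith [hf i hi, hg i hi]
  · rw [zero_add]
    exact mul_le_mul_of_nonneg_left (hgE i hi hP) (hf i hi)

theorem sq_sub_div_le_sq_sub_div {p w a t : ℝ} (ha : 0 ≤ a) (hw0 : 0 ≤ w) (hwa : w ≤ p * a)
    (hat : a ≤ t) : (p * a - w) ^ 2 / a ≤ (p * t - w) ^ 2 / t := by
  rcases ha.eq_or_lt with rfl | ha
  · rw [div_zero]
    exact div_nonneg (sq_nonneg _) hat
  rw [div_le_div_iff₀ ha (ha.trans_le hat)]
  have hw2 : w ^ 2 ≤ p ^ 2 * a * t := by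
    nlinarith [mul_le_mul hwa hwa hw0 (hw0.trans hwa),
      mul_le_mul_of_nonneg_left hat (by positivity : 0 ≤ p ^ 2 * a)]
  nlinarith [mul_nonneg (sub_nonneg.2 hat) (sub_nonneg.2 hw2)]

theorem binomPMF_nonneg {t : ℕ} {p : ℝ} (hp0 : 0 ≤ p) (hp1 : p ≤ 1) (j : ℕ) :
    0 ≤ binomPMF t p j := by
  have : 0 ≤ 1 - p := sub_nonneg.2 hp1
  unfold binomPMF
  positivity

theorem sum_binomPMF_mul_pow (t : ℕ) (p x : ℝ) :
    ∑ y ∈ range (t + 1), binomPMF t p y * x ^ y = (p * x + (1 - p)) ^ t := by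
  rw [add_pow]
  refine sum_congr rfl fun y _ => ?_
  rw [binomPMF, mul_pow]
  ring

theorem sum_binomPMF (t : ℕ) (p : ℝ) : ∑ y ∈ range (t + 1), binomPMF t p y = 1 := by
  simpa using sum_binomPMF_mul_pow t p 1

theorem sum_binomPMF_lt_le_one {t w : ℕ} {p : ℝ} (hp0 : 0 ≤ p) (hp1 : p ≤ 1) :
    ∑ y ∈ range (t + 1), (if y < w then binomPMF t p y else 0) ≤ 1 :=
  (sum_le_sum fun y _ => by
    split_ifs
    exacts [le_rfl, binomPMF_nonneg hp0 hp1 y]).trans_eq (sum_binomPMF t p)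

theorem sum_binomPMF_lt_le_exp {t w : ℕ} {p : ℝ} (hp0 : 0 ≤ p) (hp1 : p ≤ 1)
    (hw : (w : ℝ) ≤ p * t) :
    ∑ y ∈ range (t + 1), (if y < w then binomPMF t p y else 0)
      ≤ exp (-2 * (p * t - w) ^ 2 / t) := by
  rcases Nat.eq_zero_or_pos t with rfl | ht
  · obtain rfl : w = 0 := by exact_mod_cast le_antisymm (by simpa using hw) w.cast_nonneg
    simp only [Nat.not_lt_zero, if_false, sum_const_zero]
    positivity
  have ht' : (0 : ℝ) < t := Nat.cast_pos.2 ht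
  -- minimises the exponent `l * w - p * l * t + t * l ^ 2 / 8` below
  set l := 4 * (p * t - w) / t
  have hl : 0 ≤ l := div_nonneg (by linarith) ht'.le
  calc ∑ y ∈ range (t + 1), (if y < w then binomPMF t p y else 0)
      = ∑ y ∈ range (t + 1), (if (y : ℝ) < w then binomPMF t p y else 0) := by
        simp only [Nat.cast_lt]
    _ ≤ ∑ y ∈ range (t + 1), binomPMF t p y * exp (l * (w - y)) :=
        sum_ite_lt_le_sum_mul_exp _ (fun y _ => binomPMF_nonneg hp0 hp1 y) hl
    _ = exp (l * w) * (p * exp (-l) + (1 - p)) ^ t := by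
        rw [← sum_binomPMF_mul_pow, mul_sum]
        refine sum_congr rfl fun y _ => ?_
        rw [← exp_nat_mul, mul_left_comm, ← exp_add]
        ring_nf
    _ ≤ exp (l * w) * exp (p * -l + (-l) ^ 2 / 8) ^ t := by
        gcongr
        linarith [one_sub_add_mul_exp_le_exp hp0 hp1 (-l)]
    _ = exp (-2 * (p * t - w) ^ 2 / t) := by
        rw [← exp_nat_mul, ← exp_add]
        congr 1
        simp only [l]
        field_simp
        ring

theorem sum_binomPMF_lt_le_exp_of_le {t w : ℕ} {p a : ℝ} (hp0 : 0 ≤ p) (hp1 : p ≤ 1)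
    (ha : 0 ≤ a) (hw : (w : ℝ) ≤ p * a) (hat : a ≤ t) :
    ∑ y ∈ range (t + 1), (if y < w then binomPMF t p y else 0)
      ≤ exp (-2 * (p * a - w) ^ 2 / a) := by
  refine (sum_binomPMF_lt_le_exp hp0 hp1 (hw.trans (by gcongr))).trans (exp_le_exp.2 ?_)
  have := sq_sub_div_le_sq_sub_div ha w.cast_nonneg hw hat
  rw [mul_div_assoc, mul_div_assoc]
  linarith

theorem Nat.sum_range_choose_mul_choose (a b n : ℕ) :
    ∑ r ∈ range (n + 1), a.choose r * b.choose (n - r) = (a + b).choose n := by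
  rw [Nat.add_choose_eq, Nat.sum_antidiagonal_eq_sum_range_succ_mk]

theorem Nat.sum_range_choose_mul_choose_mul_choose {N K s j : ℕ} (hK : K ≤ N) (hj : j ≤ s) :
    ∑ t ∈ range (s + 1), K.choose t * (N - K).choose (s - t) * t.choose j
      = K.choose j * (N - j).choose (s - j) := by
  have hsplit : s + 1 = j + (s - j + 1) := by omega
  rw [hsplit, sum_range_add, sum_eq_zero fun t ht => by
    rw [Nat.choose_eq_zero_of_lt (mem_range.1 ht), mul_zero], zero_add]
  calc ∑ r ∈ range (s - j + 1), K.choose (j + r) * (N - K).choose (s - (j + r)) * (j + r).choose j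
      = ∑ r ∈ range (s - j + 1), K.choose j * ((K - j).choose r * (N - K).choose (s - j - r)) := by
        refine sum_congr rfl fun r _ => ?_
        have h := Nat.choose_mul (n := K) (Nat.le_add_right j r)
        rw [Nat.add_sub_cancel_left] at h
        rw [Nat.sub_add_eq, mul_right_comm, h, mul_assoc]
    _ = K.choose j * (N - j).choose (s - j) := by
        rw [← mul_sum, Nat.sum_range_choose_mul_choose]
        rcases le_or_gt j K with hjK | hjK
        · rw [show K - j + (N - K) = N - j by omega]
        · rw [Nat.choose_eq_zero_of_lt hjK, zero_mul, zero_mul]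

theorem Nat.descFactorial_mul_pow_le {K N : ℕ} (h : K ≤ N) (j : ℕ) :
    K.descFactorial j * N ^ j ≤ N.descFactorial j * K ^ j := by
  induction j with
  | zero => simp
  | succ j ih =>
    have hstep : (K - j) * N ≤ (N - j) * K := by
      rw [Nat.sub_mul, Nat.sub_mul, mul_comm K N]
      exact Nat.sub_le_sub_left (Nat.mul_le_mul_left j h) _
    calc K.descFactorial (j + 1) * N ^ (j + 1)
        = ((K - j) * N) * (K.descFactorial j * N ^ j) := by
          rw [Nat.descFactorial_succ, pow_succ]; ring
      _ ≤ ((N - j) * K) * (N.descFactorial j * K ^ j) := Nat.mul_le_mul hstep ih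
      _ = N.descFactorial (j + 1) * K ^ (j + 1) := by
          rw [Nat.descFactorial_succ, pow_succ]; ring

theorem choose_le_choose_mul_div_pow {K N : ℕ} (h : K ≤ N) (j : ℕ) :
    (K.choose j : ℝ) ≤ N.choose j * ((K : ℝ) / N) ^ j := by
  rcases Nat.eq_zero_or_pos N with rfl | hN
  · obtain rfl := Nat.le_zero.1 h
    rcases j with _ | j <;> simp
  have hnat : K.choose j * N ^ j ≤ N.choose j * K ^ j := by
    refine Nat.le_of_mul_le_mul_left ?_ j.factorial_pos
    simpa only [Nat.descFactorial_eq_factorial_mul_choose, mul_assoc]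
      using Nat.descFactorial_mul_pow_le h j
  rw [div_pow, mul_div_assoc', le_div_iff₀ (by positivity)]
  exact_mod_cast hnat

theorem one_add_pow_eq_sum_range_choose_mul_pow {R : Type*} [CommSemiring R] {t n : ℕ} (h : t ≤ n)
    (y : R) : (1 + y) ^ t = ∑ j ∈ range (n + 1), (t.choose j : R) * y ^ j := by
  rw [add_comm, add_pow]
  refine (sum_subset (range_subset_range.2 (Nat.succ_le_succ h)) fun j _ hj => ?_).trans ?_
  · rw [Nat.choose_eq_zero_of_lt (by simpa using hj), Nat.cast_zero, mul_zero]
  · exact sum_congr rfl fun j _ => by ring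

theorem hypergeomPMF_nonneg (N K n j : ℕ) : 0 ≤ hypergeomPMF N K n j := by
  unfold hypergeomPMF
  positivity

theorem sum_hypergeomPMF {N K n : ℕ} (hK : K ≤ N) (hn : n ≤ N) :
    ∑ j ∈ range (n + 1), hypergeomPMF N K n j = 1 := by
  have hvdm : ∑ j ∈ range (n + 1), (K.choose j : ℝ) * ((N - K).choose (n - j) : ℝ)
      = N.choose n := by
    exact_mod_cast (Nat.add_sub_cancel' hK ▸ Nat.sum_range_choose_mul_choose K (N - K) n)
  simp only [hypergeomPMF]
  rw [← sum_div, hvdm, div_self (by exact_mod_cast (Nat.choose_pos hn).ne')]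

theorem hypergeomPMF_compl {N K n j : ℕ} (hK : K ≤ N) (hj : j ≤ n) :
    hypergeomPMF N (N - K) n (n - j) = hypergeomPMF N K n j := by
  rw [hypergeomPMF, hypergeomPMF, Nat.sub_sub_self hK, Nat.sub_sub_self hj, mul_comm]

theorem sum_range_choose_mul_choose_mul_pow {N K s : ℕ} (hK : K ≤ N) (x : ℝ) :
    ∑ t ∈ range (s + 1), (K.choose t : ℝ) * (N - K).choose (s - t) * x ^ t
      = ∑ j ∈ range (s + 1), ((K.choose j * (N - j).choose (s - j) : ℕ) : ℝ) * (x - 1) ^ j := by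
  calc _ = ∑ t ∈ range (s + 1), ∑ j ∈ range (s + 1),
        ((K.choose t * (N - K).choose (s - t) * t.choose j : ℕ) : ℝ) * (x - 1) ^ j := by
        refine sum_congr rfl fun t ht => ?_
        have hpow :=
          one_add_pow_eq_sum_range_choose_mul_pow (Nat.lt_succ_iff.1 (mem_range.1 ht)) (x - 1)
        rw [add_sub_cancel] at hpow
        rw [hpow, mul_sum]
        exact sum_congr rfl fun j _ => by push_cast; ring
    _ = _ := by
        rw [sum_comm]
        refine sum_congr rfl fun j hj => ?_
        rw [← sum_mul, ← Nat.cast_sum,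
          Nat.sum_range_choose_mul_choose_mul_choose hK (Nat.lt_succ_iff.1 (mem_range.1 hj))]

-- Chvátal: in the expansion in powers of `x - 1 ≥ 0`, the coefficients are the factorial
-- moments `E (T choose j) = (K choose j) (N - j choose s - j) / (N choose s)`, dominated by the
-- binomial ones `(s choose j) (K / N) ^ j`.
theorem sum_hypergeomPMF_mul_pow_le {N K s : ℕ} (hK : K ≤ N) {x : ℝ} (hx : 1 ≤ x) :
    ∑ t ∈ range (s + 1), hypergeomPMF N K s t * x ^ t ≤ (1 + (x - 1) * K / N) ^ s := by
  have hbinom : (N.choose s : ℝ) * (1 + (x - 1) * K / N) ^ s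
      = ∑ j ∈ range (s + 1),
          ((N.choose j * (N - j).choose (s - j) : ℕ) : ℝ) * ((K : ℝ) / N) ^ j * (x - 1) ^ j := by
    rw [mul_div_assoc, one_add_pow_eq_sum_range_choose_mul_pow le_rfl, mul_sum]
    refine sum_congr rfl fun j hj => ?_
    rw [← Nat.choose_mul (Nat.lt_succ_iff.1 (mem_range.1 hj)), mul_pow]
    push_cast
    ring
  have hbase : 0 ≤ 1 + (x - 1) * K / N :=
    add_nonneg zero_le_one (div_nonneg (mul_nonneg (sub_nonneg.2 hx) K.cast_nonneg) N.cast_nonneg)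
  calc ∑ t ∈ range (s + 1), hypergeomPMF N K s t * x ^ t
      = (∑ t ∈ range (s + 1), (K.choose t : ℝ) * (N - K).choose (s - t) * x ^ t)
          / N.choose s := by
        simp only [hypergeomPMF, sum_div, div_mul_eq_mul_div]
    _ ≤ (1 + (x - 1) * K / N) ^ s := by
        refine div_le_of_le_mul₀ (by positivity) (pow_nonneg hbase s) ?_
        rw [mul_comm, hbinom, sum_range_choose_mul_choose_mul_pow hK]
        refine sum_le_sum fun j _ => ?_
        have hx1 : 0 ≤ x - 1 := sub_nonneg.2 hx
        push_cast
        calc (K.choose j : ℝ) * (N - j).choose (s - j) * (x - 1) ^ j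
            ≤ N.choose j * ((K : ℝ) / N) ^ j * (N - j).choose (s - j) * (x - 1) ^ j := by
              gcongr
              exact choose_le_choose_mul_div_pow hK j
          _ = N.choose j * (N - j).choose (s - j) * ((K : ℝ) / N) ^ j * (x - 1) ^ j := by ring

theorem sum_hypergeomPMF_lt_le_exp {N m s : ℕ} (hm : m ≤ N) (hN : 0 < N) {χ : ℝ} (hχ : 0 ≤ χ) :
    ∑ t ∈ range (s + 1), (if (t : ℝ) < ((m : ℝ) / N - χ) * s then hypergeomPMF N m s t else 0)
      ≤ exp (-2 * χ ^ 2 * s) := by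
  set μ := (m : ℝ) / N - χ
  -- minimises the exponent `-l * χ * s + s * l ^ 2 / 8` below
  set l := 4 * χ
  set q := 1 - (m : ℝ) / N
  have hl : 0 ≤ l := by positivity
  have hmN : (m : ℝ) / N ≤ 1 := div_le_one_of_le₀ (by exact_mod_cast hm) N.cast_nonneg
  have hq0 : 0 ≤ q := sub_nonneg.2 hmN
  have hq1 : q ≤ 1 := sub_le_self _ (by positivity)
  have hq : ((N - m : ℕ) : ℝ) / N = q := by
    rw [Nat.cast_sub hm, sub_div, div_self (by positivity)]
  have hcompl : ∑ t ∈ range (s + 1), hypergeomPMF N (N - m) s t * exp l ^ t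
      ≤ (1 + (exp l - 1) * q) ^ s := by
    simpa only [mul_div_assoc, hq]
      using sum_hypergeomPMF_mul_pow_le (Nat.sub_le N m) (one_le_exp hl)
  calc ∑ t ∈ range (s + 1), (if (t : ℝ) < μ * s then hypergeomPMF N m s t else 0)
      ≤ ∑ t ∈ range (s + 1), hypergeomPMF N m s t * exp (l * (μ * s - t)) :=
        sum_ite_lt_le_sum_mul_exp _ (fun t _ => hypergeomPMF_nonneg N m s t) hl
    -- the lower tail of `T` is the upper tail of `s - T ~ Hypergeometric(N, N - m, s)`
    _ = exp (l * μ * s - l * s) *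
          ∑ t ∈ range (s + 1), hypergeomPMF N (N - m) s (s - t) * exp l ^ (s - t) := by
        rw [mul_sum]
        refine sum_congr rfl fun t ht => ?_
        have hts := Nat.lt_succ_iff.1 (mem_range.1 ht)
        rw [hypergeomPMF_compl hm hts, ← exp_nat_mul, Nat.cast_sub hts, mul_left_comm, ← exp_add]
        ring_nf
    _ = exp (l * μ * s - l * s) * ∑ t ∈ range (s + 1), hypergeomPMF N (N - m) s t * exp l ^ t := by
        congr 1
        simpa using sum_range_reflect (fun t => hypergeomPMF N (N - m) s t * exp l ^ t) (s + 1)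
    _ ≤ exp (l * μ * s - l * s) * exp (q * l + l ^ 2 / 8) ^ s := by
        have hbase : 0 ≤ 1 + (exp l - 1) * q :=
          add_nonneg zero_le_one (mul_nonneg (sub_nonneg.2 (one_le_exp hl)) hq0)
        gcongr
        refine hcompl.trans (pow_le_pow_left₀ hbase ?_ s)
        linarith [one_sub_add_mul_exp_le_exp hq0 hq1 l]
    _ = exp (-2 * χ ^ 2 * s) := by
        rw [← exp_nat_mul, ← exp_add]
        congr 1
        simp only [μ, l, q]
        ring

/-- **Test-round detection bound** (the ε part of the negligible security error
lemma): let `T ~ Hypergeometric(N, m, s)` be the number of attacked test rounds,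
and conditionally on `T = t` let `Y ~ Binomial(t, 1/k)` count the detected ones
(each attacked test round is detected with probability at least `1/k`). Then for
`χ ≥ 0` with `m/N − χ ≥ 0` and `w/s ≤ ((m/N) − χ)/k`,
`Pr[Y < w] ≤ exp(−2χ²s) + exp(−2(((m/N) − χ)/k − w/s)²·s/((m/N) − χ))`. -/
theorem test_round_detection_bound (N s m k w : ℕ) (hs : s ≤ N) (hm : m ≤ N)
    (hk : 1 ≤ k) (χ : ℝ) (hχ0 : 0 ≤ χ) (hχ1 : 0 ≤ (m : ℝ) / N - χ)
    (hw : (w : ℝ) / s ≤ ((m : ℝ) / N - χ) / k) :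
    (∑ t ∈ Finset.range (s + 1), ∑ y ∈ Finset.range (t + 1),
        if y < w then hypergeomPMF N m s t * binomPMF t (1 / k) y else 0)
      ≤ Real.exp (-2 * χ ^ 2 * s)
        + Real.exp (-2 * (((m : ℝ) / N - χ) / k - (w : ℝ) / s) ^ 2 * s
            / ((m : ℝ) / N - χ)) := by
  obtain rfl | hs0 := Nat.eq_zero_or_pos s
  · simp [hypergeomPMF, binomPMF]
    split_ifs <;> norm_num
  set μ := (m : ℝ) / N - χ
  have hs' : (0 : ℝ) < s := Nat.cast_pos.2 hs0
  have hp0 : 0 ≤ 1 / (k : ℝ) := by positivity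
  have hp1 : 1 / (k : ℝ) ≤ 1 := (div_le_one (by positivity)).2 (Nat.one_le_cast.2 hk)
  have hwμ : (w : ℝ) ≤ 1 / k * (μ * s) := by
    rw [div_le_iff₀ hs'] at hw
    exact hw.trans_eq (by ring)
  have hexponent : -2 * (μ / k - w / s) ^ 2 * s / μ = -2 * (1 / k * (μ * s) - w) ^ 2 / (μ * s) := by
    rcases eq_or_ne μ 0 with h | h
    · simp [h]
    · field_simp
  calc (∑ t ∈ range (s + 1), ∑ y ∈ range (t + 1),
        if y < w then hypergeomPMF N m s t * binomPMF t (1 / k) y else 0)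
      = ∑ t ∈ range (s + 1), hypergeomPMF N m s t *
          ∑ y ∈ range (t + 1), (if y < w then binomPMF t (1 / k) y else 0) := by
        simp only [mul_sum, mul_ite, mul_zero]
    _ ≤ (∑ t ∈ range (s + 1), if (t : ℝ) < μ * s then hypergeomPMF N m s t else 0)
          + (∑ t ∈ range (s + 1), hypergeomPMF N m s t)
            * exp (-2 * (1 / k * (μ * s) - w) ^ 2 / (μ * s)) :=
        sum_mul_le_sum_ite_add_sum_mul _ _ (fun t _ => hypergeomPMF_nonneg N m s t)
          (fun t _ => sum_binomPMF_lt_le_one hp0 hp1)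
          (fun t _ ht => sum_binomPMF_lt_le_exp_of_le hp0 hp1 (by positivity) hwμ (not_lt.1 ht))
          (exp_pos _).le
    _ ≤ exp (-2 * χ ^ 2 * s) + exp (-2 * (μ / k - w / s) ^ 2 * s / μ) := by
        rw [sum_hypergeomPMF hm hs, one_mul, hexponent]
        gcongr
        exact sum_hypergeomPMF_lt_le_exp hm (hs0.trans_le hs) hχ0
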